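/- arXiv:1811.02712 — 8 statements merged into one kernel-verified Lean document; each statement's English description precedes it below -/
import Mathlib

section
/- Let R be a commutative ring and let A₁, A₂, A₃ be R-modules, each equipped with an R-trilinear map mᵢ : Aᵢ × Aᵢ × Aᵢ → Aᵢ that is totally ternary associative, i.e. mᵢ(mᵢ(a,b,c),d,e) = mᵢ(a,mᵢ(b,c,d),e) = mᵢ(a,b,mᵢ(c,d,e)) for all a,b,c,d,e ∈ Aᵢ. Then the R-trilinear map M on the tensor product A₁ ⊗[R] A₂ ⊗[R] A₃ determined on pure tensors by M(a₁⊗a₂⊗a₃, b₁⊗b₂⊗b₃, c₁⊗c₂⊗c₃) = m₁(a₁,b₁,c₁) ⊗ m₂(a₂,b₂,c₂) ⊗ m₃(a₃,b₃,c₃) is again totally ternary associative: M(M(x,y,z),u,v) = M(x,M(y,z,u),v) = M(x,y,M(z,u,v)) for all x,y,z,u,v ∈ A₁⊗A₂⊗A₃. -/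
open scoped TensorProduct

/-! Both sides of each associativity identity are linear in each of the five arguments, so it
suffices to check them on the pure tensors `a₁ ⊗ₜ (a₂ ⊗ₜ a₃)`, which span the triple tensor
product. On pure tensors `M` acts factorwise, and the identities reduce to those of the
`mᵢ`. -/

open Submodule

theorem TensorProduct.span_image2_tmul_eq_top {R M N : Type*} [CommSemiring R]
    [AddCommMonoid M] [Module R M] [AddCommMonoid N] [Module R N] {s : Set M} {t : Set N}
    (hs : span R s = ⊤) (ht : span R t = ⊤) :
    span R (Set.image2 (· ⊗ₜ[R] ·) s t) = ⊤ := by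
  have := map₂_span_span R (mk R M N) s t
  rwa [hs, ht, map₂_mk_top_top_eq_top, eq_comm] at this

theorem TensorProduct.span_tmul_tmul_eq_top (R M N P : Type*) [CommSemiring R]
    [AddCommMonoid M] [Module R M] [AddCommMonoid N] [Module R N] [AddCommMonoid P] [Module R P] :
    span R {x : M ⊗[R] (N ⊗[R] P) | ∃ m n p, m ⊗ₜ (n ⊗ₜ p) = x} = ⊤ := by
  convert span_image2_tmul_eq_top span_univ (span_image2_tmul_eq_top span_univ span_univ)
  simp [Set.image2]

section

variable {R V : Type*} [CommSemiring R] [AddCommMonoid V] [Module R V]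

def IsTernaryAssoc (m : V →ₗ[R] V →ₗ[R] V →ₗ[R] V) : Prop :=
  ∀ a b c d e, m (m a b c) d e = m a (m b c d) e ∧ m a (m b c d) e = m a b (m c d e)

theorem Submodule.induction_of_span_eq_top {s : Set V} (hs : span R s = ⊤) {p : V → Prop}
    (mem : ∀ x ∈ s, p x) (zero : p 0) (add : ∀ x y, p x → p y → p (x + y))
    (smul : ∀ (r : R) x, p x → p (r • x)) (x : V) : p x :=
  span_induction (p := fun x _ ↦ p x) mem zero (fun x y _ _ ↦ add x y) (fun r x _ ↦ smul r x)
    (hs ▸ mem_top)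

theorem IsTernaryAssoc.of_span {m : V →ₗ[R] V →ₗ[R] V →ₗ[R] V} {s : Set V}
    (hs : span R s = ⊤)
    (h : ∀ a ∈ s, ∀ b ∈ s, ∀ c ∈ s, ∀ d ∈ s, ∀ e ∈ s,
      m (m a b c) d e = m a (m b c d) e ∧ m a (m b c d) e = m a b (m c d e)) :
    IsTernaryAssoc m := by
  intro a b c d e
  induction a using induction_of_span_eq_top hs with
  | zero | add | smul => simp_all
  | mem a ha =>
  induction b using induction_of_span_eq_top hs with
  | zero | add | smul => simp_all
  | mem b hb =>
  induction c using induction_of_span_eq_top hs with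
  | zero | add | smul => simp_all
  | mem c hc =>
  induction d using induction_of_span_eq_top hs with
  | zero | add | smul => simp_all
  | mem d hd =>
  induction e using induction_of_span_eq_top hs with
  | zero | add | smul => simp_all
  | mem e he => exact h a ha b hb c hc d hd e he

end

/-- The tensor product of three totally ternary associative trilinear multiplications is
again totally ternary associative: if `M` is the `R`-trilinear map on
`A₁ ⊗[R] A₂ ⊗[R] A₃` determined on pure tensors componentwise by `m₁, m₂, m₃`
(i.e. `μ_⊗ = (μ₁⊗μ₂⊗μ₃)∘τ_medial`), then `M` is totally ternary associative. -/
theorem stmt4 (R A₁ A₂ A₃ : Type*) [CommRing R]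
    [AddCommGroup A₁] [Module R A₁] [AddCommGroup A₂] [Module R A₂]
    [AddCommGroup A₃] [Module R A₃]
    (m₁ : A₁ →ₗ[R] A₁ →ₗ[R] A₁ →ₗ[R] A₁)
    (m₂ : A₂ →ₗ[R] A₂ →ₗ[R] A₂ →ₗ[R] A₂)
    (m₃ : A₃ →ₗ[R] A₃ →ₗ[R] A₃ →ₗ[R] A₃)
    (h₁ : ∀ a b c d e : A₁,
      m₁ (m₁ a b c) d e = m₁ a (m₁ b c d) e ∧ m₁ a (m₁ b c d) e = m₁ a b (m₁ c d e))
    (h₂ : ∀ a b c d e : A₂,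
      m₂ (m₂ a b c) d e = m₂ a (m₂ b c d) e ∧ m₂ a (m₂ b c d) e = m₂ a b (m₂ c d e))
    (h₃ : ∀ a b c d e : A₃,
      m₃ (m₃ a b c) d e = m₃ a (m₃ b c d) e ∧ m₃ a (m₃ b c d) e = m₃ a b (m₃ c d e))
    (M : (A₁ ⊗[R] (A₂ ⊗[R] A₃)) →ₗ[R] (A₁ ⊗[R] (A₂ ⊗[R] A₃)) →ₗ[R]
      (A₁ ⊗[R] (A₂ ⊗[R] A₃)) →ₗ[R] (A₁ ⊗[R] (A₂ ⊗[R] A₃)))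
    (hM : ∀ (a₁ b₁ c₁ : A₁) (a₂ b₂ c₂ : A₂) (a₃ b₃ c₃ : A₃),
      M (a₁ ⊗ₜ[R] (a₂ ⊗ₜ[R] a₃)) (b₁ ⊗ₜ[R] (b₂ ⊗ₜ[R] b₃)) (c₁ ⊗ₜ[R] (c₂ ⊗ₜ[R] c₃))
        = (m₁ a₁ b₁ c₁) ⊗ₜ[R] ((m₂ a₂ b₂ c₂) ⊗ₜ[R] (m₃ a₃ b₃ c₃))) :
    ∀ x y z u v : A₁ ⊗[R] (A₂ ⊗[R] A₃),
      M (M x y z) u v = M x (M y z u) v ∧ M x (M y z u) v = M x y (M z u v) := by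
  refine IsTernaryAssoc.of_span (TensorProduct.span_tmul_tmul_eq_top R A₁ A₂ A₃) ?_
  rintro _ ⟨a₁, a₂, a₃, rfl⟩ _ ⟨b₁, b₂, b₃, rfl⟩ _ ⟨c₁, c₂, c₃, rfl⟩ _ ⟨d₁, d₂, d₃, rfl⟩
    _ ⟨e₁, e₂, e₃, rfl⟩
  simp only [hM, h₁, h₂, h₃, and_self]
end

section
/- Let C be the free ℂ-module on two basis vectors a and b, and let Δ : C →ₗ[ℂ] C⊗C⊗C be the unique linear map with Δ(a) = a⊗b⊗a and Δ(b) = b⊗a⊗b. Then Δ is nonderived: there is no ℂ-linear map Δ₀ : C →ₗ[ℂ] C⊗C such that both (Δ₀⊗id_C)∘Δ₀ = Δ and (id_C⊗Δ₀)∘Δ₀ = Δ (up to canonical associator isomorphisms). -/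
/-!
Write `w = Δ₀ a`. Contracting the outer tensor factor of the two factorizations of
`Δ a = a ⊗ b ⊗ a` with a functional `γ` shows that `Δ₀` sends the left contraction of `w` by `γ`
to `γ a • b ⊗ a` and the right one to `γ a • a ⊗ b`. For the coordinate functionals, left minus
right contraction of `w` is `det w • b` resp. `-(det w • a)`, where `det (x ⊗ y) = x₁y₂ - x₂y₁`.
Hence `det w • Δ₀ b = b ⊗ a - a ⊗ b` and `det w • w = 0`; the latter forces `det w = 0`, and then
`b ⊗ a = a ⊗ b`, which is false.
-/

open scoped TensorProduct

namespace TensorProduct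

section Contraction

variable {R M N P : Type*} [CommSemiring R] [AddCommMonoid M] [AddCommMonoid N] [AddCommMonoid P]
  [Module R M] [Module R N] [Module R P]

def leftContract (γ : M →ₗ[R] R) : M ⊗[R] N →ₗ[R] N :=
  lift ((LinearMap.lsmul R N).comp γ)

def rightContract (γ : N →ₗ[R] R) : M ⊗[R] N →ₗ[R] M :=
  lift ((LinearMap.lsmul R M).flip.compl₂ γ)

@[simp]
theorem leftContract_tmul (γ : M →ₗ[R] R) (x : M) (y : N) :
    leftContract γ (x ⊗ₜ[R] y) = γ x • y :=
  rfl

@[simp]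
theorem rightContract_tmul (γ : N →ₗ[R] R) (x : M) (y : N) :
    rightContract γ (x ⊗ₜ[R] y) = γ y • x :=
  rfl

theorem leftContract_lTensor (γ : M →ₗ[R] R) (f : N →ₗ[R] P) (t : M ⊗[R] N) :
    leftContract γ (f.lTensor M t) = f (leftContract γ t) := by
  induction t using TensorProduct.induction_on with
  | zero => simp
  | tmul x y => simp
  | add s t hs ht => simp only [map_add, hs, ht]

theorem rightContract_rTensor (γ : N →ₗ[R] R) (f : M →ₗ[R] P) (t : M ⊗[R] N) :
    rightContract γ (f.rTensor N t) = f (rightContract γ t) := by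
  induction t using TensorProduct.induction_on with
  | zero => simp
  | tmul x y => simp
  | add s t hs ht => simp only [map_add, hs, ht]

end Contraction

section Det

variable {R : Type*} [CommRing R]

def det₂ : (R × R) ⊗[R] (R × R) →ₗ[R] R :=
  lift (LinearMap.mk₂ R (fun x y => x.1 * y.2 - x.2 * y.1)
    (fun _ _ _ => by simp only [Prod.fst_add, Prod.snd_add]; ring)
    (fun _ _ _ => by simp only [Prod.smul_fst, Prod.smul_snd, smul_eq_mul]; ring)
    (fun _ _ _ => by simp only [Prod.fst_add, Prod.snd_add]; ring)
    (fun _ _ _ => by simp only [Prod.smul_fst, Prod.smul_snd, smul_eq_mul]; ring))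

@[simp]
theorem det₂_tmul (x y : R × R) : det₂ (x ⊗ₜ[R] y) = x.1 * y.2 - x.2 * y.1 :=
  rfl

theorem leftContract_fst_sub_rightContract_fst (t : (R × R) ⊗[R] (R × R)) :
    leftContract (LinearMap.fst R R R) t - rightContract (LinearMap.fst R R R) t =
      det₂ t • (0, 1) := by
  induction t using TensorProduct.induction_on with
  | zero => simp
  | tmul x y => ext <;> simp <;> ring
  | add s t hs ht => rw [map_add, map_add, map_add, add_smul, ← hs, ← ht]; abel

theorem rightContract_snd_sub_leftContract_snd (t : (R × R) ⊗[R] (R × R)) :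
    rightContract (LinearMap.snd R R R) t - leftContract (LinearMap.snd R R R) t =
      det₂ t • (1, 0) := by
  induction t using TensorProduct.induction_on with
  | zero => simp
  | tmul x y => ext <;> simp <;> ring
  | add s t hs ht => rw [map_add, map_add, map_add, add_smul, ← hs, ← ht]; abel

end Det

end TensorProduct

open TensorProduct in
theorem false_of_aba_factorization {R : Type*} [CommRing R] [Nontrivial R]
    (Δ₀ : R × R →ₗ[R] (R × R) ⊗[R] (R × R))
    (hl : Δ₀.lTensor (R × R) (Δ₀ (1, 0)) = ((1, 0) : R × R) ⊗ₜ[R] ((0, 1) ⊗ₜ[R] (1, 0)))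
    (hr : Δ₀.rTensor (R × R) (Δ₀ (1, 0)) = (((1, 0) : R × R) ⊗ₜ[R] (0, 1)) ⊗ₜ[R] (1, 0)) :
    False := by
  set w := Δ₀ (1, 0)
  have hleft (γ : R × R →ₗ[R] R) : Δ₀ (leftContract γ w) = γ (1, 0) • ((0, 1) ⊗ₜ[R] (1, 0)) := by
    rw [← leftContract_lTensor, hl, leftContract_tmul]
  have hright (γ : R × R →ₗ[R] R) : Δ₀ (rightContract γ w) = γ (1, 0) • ((1, 0) ⊗ₜ[R] (0, 1)) := by
    rw [← rightContract_rTensor, hr, rightContract_tmul]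
  let θ := leftContract (LinearMap.snd R R R) ∘ₗ Δ₀
  have hθ : det₂ w • θ (0, 1) = (1, 0) := by
    rw [← map_smul, ← leftContract_fst_sub_rightContract_fst, map_sub]
    simp [θ, hleft, hright]
  have hdet_smul_w : det₂ w • w = 0 := by
    rw [← map_smul, ← rightContract_snd_sub_leftContract_snd, map_sub, hleft, hright]
    simp
  have hdet : det₂ w = 0 := by
    have h := congrArg (θ ∘ leftContract (LinearMap.fst R R R)) hdet_smul_w
    simpa [θ, hleft] using congrArg Prod.fst h
  simpa [hdet] using congrArg Prod.fst hθ

theorem stmt8_general (Δ : (ℂ × ℂ) →ₗ[ℂ] (ℂ × ℂ) ⊗[ℂ] ((ℂ × ℂ) ⊗[ℂ] (ℂ × ℂ)))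
    (ha : Δ (1, 0) = ((1, 0) : ℂ × ℂ) ⊗ₜ[ℂ] ((((0, 1) : ℂ × ℂ)) ⊗ₜ[ℂ] (((1, 0) : ℂ × ℂ)))) :
    ¬ ∃ Δ₀ : (ℂ × ℂ) →ₗ[ℂ] (ℂ × ℂ) ⊗[ℂ] (ℂ × ℂ),
      ((TensorProduct.assoc ℂ (ℂ × ℂ) (ℂ × ℂ) (ℂ × ℂ)).toLinearMap).comp
          ((TensorProduct.map Δ₀ LinearMap.id).comp Δ₀) = Δ ∧
        (TensorProduct.map LinearMap.id Δ₀).comp Δ₀ = Δ := by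
  rintro ⟨Δ₀, hright, hleft⟩
  refine false_of_aba_factorization Δ₀ ((LinearMap.congr_fun hleft (1, 0)).trans ha) ?_
  apply (TensorProduct.assoc ℂ _ _ _).injective
  exact (LinearMap.congr_fun hright (1, 0)).trans ha

/-- On the free `ℂ`-module `C = ℂ²` with basis `a = (1,0)`, `b = (0,1)`, the ternary
comultiplication `Δ(a) = a⊗b⊗a`, `Δ(b) = b⊗a⊗b` is nonderived: there is no binary
comultiplication `Δ₀` with `(Δ₀ ⊗ id) ∘ Δ₀ = Δ = (id ⊗ Δ₀) ∘ Δ₀` (up to the canonical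
associator). -/
theorem stmt8 (Δ : (ℂ × ℂ) →ₗ[ℂ] (ℂ × ℂ) ⊗[ℂ] ((ℂ × ℂ) ⊗[ℂ] (ℂ × ℂ)))
    (ha : Δ (1, 0) = ((1, 0) : ℂ × ℂ) ⊗ₜ[ℂ] ((((0, 1) : ℂ × ℂ)) ⊗ₜ[ℂ] (((1, 0) : ℂ × ℂ))))
    (hb : Δ (0, 1) = ((0, 1) : ℂ × ℂ) ⊗ₜ[ℂ] ((((1, 0) : ℂ × ℂ)) ⊗ₜ[ℂ] (((0, 1) : ℂ × ℂ)))) :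
    ¬ ∃ Δ₀ : (ℂ × ℂ) →ₗ[ℂ] (ℂ × ℂ) ⊗[ℂ] (ℂ × ℂ),
      ((TensorProduct.assoc ℂ (ℂ × ℂ) (ℂ × ℂ) (ℂ × ℂ)).toLinearMap).comp
          ((TensorProduct.map Δ₀ LinearMap.id).comp Δ₀) = Δ ∧
        (TensorProduct.map LinearMap.id Δ₀).comp Δ₀ = Δ :=
  stmt8_general Δ ha
end

section
/- Let C be the free ℂ-module on four basis vectors x, g₁, g₂, g₃, and let Δ : C →ₗ[ℂ] C⊗C⊗C be the unique linear map with Δ(x) = g₁⊗x⊗x + x⊗g₂⊗x + x⊗x⊗g₃ and Δ(gᵢ) = gᵢ⊗gᵢ⊗gᵢ for i = 1,2,3. Then Δ is not totally ternary coassociative; in fact (Δ⊗id_C⊗id_C)∘Δ ≠ (id_C⊗id_C⊗Δ)∘Δ as linear maps C → C^{⊗5}. -/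
/-
Pair `(Δ ⊗ id ⊗ id) ∘ Δ` and `(id ⊗ id ⊗ Δ) ∘ Δ` at `x` with the functional reading off the
coefficient of `g₁ ⊗ g₁ ⊗ g₁ ⊗ x ⊗ x`. On the left this monomial arises exactly once, from
`Δ(g₁) ⊗ x ⊗ x`, so the coefficient is `1`; on the right every term has `x` in one of its first
two slots, so it is `0`.
-/

open scoped TensorProduct

/-- `(Δ ⊗ id ⊗ id) ∘ Δ : C → C^{⊗5}`, written with the canonical associators so that it
lands in the right-nested fivefold tensor power. -/
noncomputable def coassocComp1 {R C : Type*} [CommRing R] [AddCommGroup C] [Module R C]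
    (Δ : C →ₗ[R] C ⊗[R] (C ⊗[R] C)) :
    C →ₗ[R] C ⊗[R] (C ⊗[R] (C ⊗[R] (C ⊗[R] C))) :=
  (((TensorProduct.assoc R C (C ⊗[R] C) (C ⊗[R] C)).trans
      (TensorProduct.congr (LinearEquiv.refl R C)
        (TensorProduct.assoc R C C (C ⊗[R] C)))).toLinearMap).comp
    ((TensorProduct.map Δ LinearMap.id).comp Δ)

/-- `(id ⊗ Δ ⊗ id) ∘ Δ : C → C^{⊗5}`, written with the canonical associators. -/
noncomputable def coassocComp2 {R C : Type*} [CommRing R] [AddCommGroup C] [Module R C]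
    (Δ : C →ₗ[R] C ⊗[R] (C ⊗[R] C)) :
    C →ₗ[R] C ⊗[R] (C ⊗[R] (C ⊗[R] (C ⊗[R] C))) :=
  ((TensorProduct.congr (LinearEquiv.refl R C)
      ((TensorProduct.assoc R C (C ⊗[R] C) C).trans
        (TensorProduct.congr (LinearEquiv.refl R C)
          (TensorProduct.assoc R C C C)))).toLinearMap).comp
    ((TensorProduct.map LinearMap.id (TensorProduct.map Δ LinearMap.id)).comp Δ)

/-- `(id ⊗ id ⊗ Δ) ∘ Δ : C → C^{⊗5}`. -/
noncomputable def coassocComp3 {R C : Type*} [CommRing R] [AddCommGroup C] [Module R C]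
    (Δ : C →ₗ[R] C ⊗[R] (C ⊗[R] C)) :
    C →ₗ[R] C ⊗[R] (C ⊗[R] (C ⊗[R] (C ⊗[R] C))) :=
  (TensorProduct.map LinearMap.id (TensorProduct.map LinearMap.id Δ)).comp Δ

/-- Total ternary coassociativity of a ternary comultiplication `Δ : C → C^{⊗3}`. -/
noncomputable def TernaryCoassoc {R C : Type*} [CommRing R] [AddCommGroup C] [Module R C]
    (Δ : C →ₗ[R] C ⊗[R] (C ⊗[R] C)) : Prop :=
  coassocComp1 Δ = coassocComp2 Δ ∧ coassocComp2 Δ = coassocComp3 Δ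

open TensorProduct Module

section SkewPrimitive

variable {R C : Type*} [CommRing R] [AddCommGroup C] [Module R C]

noncomputable def dualTensor₅ (φ₁ φ₂ φ₃ φ₄ φ₅ : Dual R C) :
    Dual R (C ⊗[R] (C ⊗[R] (C ⊗[R] (C ⊗[R] C)))) :=
  dualDistrib R _ _ (φ₁ ⊗ₜ dualDistrib R _ _ (φ₂ ⊗ₜ dualDistrib R _ _ (φ₃ ⊗ₜ
    dualDistrib R _ _ (φ₄ ⊗ₜ φ₅))))

variable {Δ : C →ₗ[R] C ⊗[R] (C ⊗[R] C)} {x g₁ g₂ g₃ : C} {ε₀ ε₁ : Dual R C}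

theorem dualTensor₅_coassocComp1_of_skewPrimitive
    (hx : Δ x = g₁ ⊗ₜ (x ⊗ₜ x) + x ⊗ₜ (g₂ ⊗ₜ x) + x ⊗ₜ (x ⊗ₜ g₃))
    (hg₁ : Δ g₁ = g₁ ⊗ₜ (g₁ ⊗ₜ g₁)) (h₁g₁ : ε₁ g₁ = 1) (h₀x : ε₀ x = 1) (h₀g₂ : ε₀ g₂ = 0)
    (h₀g₃ : ε₀ g₃ = 0) :
    dualTensor₅ ε₁ ε₁ ε₁ ε₀ ε₀ (coassocComp1 Δ x) = 1 := by
  simp [dualTensor₅, coassocComp1, hx, hg₁, add_tmul, h₁g₁, h₀x, h₀g₂, h₀g₃]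

theorem dualTensor₅_coassocComp3_of_skewPrimitive
    (hx : Δ x = g₁ ⊗ₜ (x ⊗ₜ x) + x ⊗ₜ (g₂ ⊗ₜ x) + x ⊗ₜ (x ⊗ₜ g₃)) (h₁x : ε₁ x = 0) :
    dualTensor₅ ε₁ ε₁ ε₁ ε₀ ε₀ (coassocComp3 Δ x) = 0 := by
  simp [dualTensor₅, coassocComp3, hx, h₁x]

theorem coassocComp1_ne_coassocComp3_of_skewPrimitive [Nontrivial R]
    (hx : Δ x = g₁ ⊗ₜ (x ⊗ₜ x) + x ⊗ₜ (g₂ ⊗ₜ x) + x ⊗ₜ (x ⊗ₜ g₃))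
    (hg₁ : Δ g₁ = g₁ ⊗ₜ (g₁ ⊗ₜ g₁)) (h₁g₁ : ε₁ g₁ = 1) (h₁x : ε₁ x = 0) (h₀x : ε₀ x = 1)
    (h₀g₂ : ε₀ g₂ = 0) (h₀g₃ : ε₀ g₃ = 0) :
    coassocComp1 Δ ≠ coassocComp3 Δ := fun h ↦ by
  have h₁ := dualTensor₅_coassocComp1_of_skewPrimitive hx hg₁ h₁g₁ h₀x h₀g₂ h₀g₃
  rw [h, dualTensor₅_coassocComp3_of_skewPrimitive hx h₁x] at h₁
  exact zero_ne_one h₁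

end SkewPrimitive

theorem TernaryCoassoc.coassocComp1_eq_coassocComp3 {R C : Type*} [CommRing R]
    [AddCommGroup C] [Module R C] {Δ : C →ₗ[R] C ⊗[R] (C ⊗[R] C)} (h : TernaryCoassoc Δ) :
    coassocComp1 Δ = coassocComp3 Δ :=
  h.1.trans h.2

theorem stmt9_general (Δ : (Fin 4 → ℂ) →ₗ[ℂ] (Fin 4 → ℂ) ⊗[ℂ] ((Fin 4 → ℂ) ⊗[ℂ] (Fin 4 → ℂ)))
    (hx : Δ (Pi.single 0 1) =
      (Pi.single 1 1 : Fin 4 → ℂ) ⊗ₜ[ℂ]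
          ((Pi.single 0 1 : Fin 4 → ℂ) ⊗ₜ[ℂ] (Pi.single 0 1 : Fin 4 → ℂ)) +
        (Pi.single 0 1 : Fin 4 → ℂ) ⊗ₜ[ℂ]
          ((Pi.single 2 1 : Fin 4 → ℂ) ⊗ₜ[ℂ] (Pi.single 0 1 : Fin 4 → ℂ)) +
        (Pi.single 0 1 : Fin 4 → ℂ) ⊗ₜ[ℂ]
          ((Pi.single 0 1 : Fin 4 → ℂ) ⊗ₜ[ℂ] (Pi.single 3 1 : Fin 4 → ℂ)))
    (hg1 : Δ (Pi.single 1 1) =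
      (Pi.single 1 1 : Fin 4 → ℂ) ⊗ₜ[ℂ]
        ((Pi.single 1 1 : Fin 4 → ℂ) ⊗ₜ[ℂ] (Pi.single 1 1 : Fin 4 → ℂ))) :
    ¬ TernaryCoassoc Δ ∧ coassocComp1 Δ ≠ coassocComp3 Δ := by
  have hne : coassocComp1 Δ ≠ coassocComp3 Δ :=
    coassocComp1_ne_coassocComp3_of_skewPrimitive (ε₀ := LinearMap.proj 0)
      (ε₁ := LinearMap.proj 1) hx hg1 (by simp) (by simp) (by simp) (by simp) (by simp)
  exact ⟨fun h ↦ hne h.coassocComp1_eq_coassocComp3, hne⟩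

/-- On the free `ℂ`-module with basis `x, g₁, g₂, g₃`, the ternary comultiplication of a
'nonlinear' skew primitive element, `Δ(x) = g₁⊗x⊗x + x⊗g₂⊗x + x⊗x⊗g₃` with semigroup-like
`gᵢ` (`Δ(gᵢ) = gᵢ⊗gᵢ⊗gᵢ`), is not totally ternary coassociative; in fact
`(Δ⊗id⊗id)∘Δ ≠ (id⊗id⊗Δ)∘Δ`. -/
theorem stmt9 (Δ : (Fin 4 → ℂ) →ₗ[ℂ] (Fin 4 → ℂ) ⊗[ℂ] ((Fin 4 → ℂ) ⊗[ℂ] (Fin 4 → ℂ)))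
    (hx : Δ (Pi.single 0 1) =
      (Pi.single 1 1 : Fin 4 → ℂ) ⊗ₜ[ℂ]
          ((Pi.single 0 1 : Fin 4 → ℂ) ⊗ₜ[ℂ] (Pi.single 0 1 : Fin 4 → ℂ)) +
        (Pi.single 0 1 : Fin 4 → ℂ) ⊗ₜ[ℂ]
          ((Pi.single 2 1 : Fin 4 → ℂ) ⊗ₜ[ℂ] (Pi.single 0 1 : Fin 4 → ℂ)) +
        (Pi.single 0 1 : Fin 4 → ℂ) ⊗ₜ[ℂ]
          ((Pi.single 0 1 : Fin 4 → ℂ) ⊗ₜ[ℂ] (Pi.single 3 1 : Fin 4 → ℂ)))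
    (hg1 : Δ (Pi.single 1 1) =
      (Pi.single 1 1 : Fin 4 → ℂ) ⊗ₜ[ℂ]
        ((Pi.single 1 1 : Fin 4 → ℂ) ⊗ₜ[ℂ] (Pi.single 1 1 : Fin 4 → ℂ)))
    (hg2 : Δ (Pi.single 2 1) =
      (Pi.single 2 1 : Fin 4 → ℂ) ⊗ₜ[ℂ]
        ((Pi.single 2 1 : Fin 4 → ℂ) ⊗ₜ[ℂ] (Pi.single 2 1 : Fin 4 → ℂ)))
    (hg3 : Δ (Pi.single 3 1) =
      (Pi.single 3 1 : Fin 4 → ℂ) ⊗ₜ[ℂ]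
        ((Pi.single 3 1 : Fin 4 → ℂ) ⊗ₜ[ℂ] (Pi.single 3 1 : Fin 4 → ℂ))) :
    ¬ TernaryCoassoc Δ ∧ coassocComp1 Δ ≠ coassocComp3 Δ :=
  stmt9_general Δ hx hg1
end

section
/- The ternary operation f on ℂ × ℂ defined by f((a₁,a₂),(b₁,b₂),(c₁,c₂)) = (a₁·b₂·c₁, a₂·b₁·c₂) is totally ternary associative: for all a, b, c, d, e ∈ ℂ × ℂ one has f(f(a,b,c),d,e) = f(a,f(b,c,d),e) = f(a,b,f(c,d,e)). -/
/-- The ternary multiplication `μ_A^{(3)}` of the polyadic algebra `A^{(3,3;3,3;2)}`: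
`f((a₁,a₂),(b₁,b₂),(c₁,c₂)) = (a₁·b₂·c₁, a₂·b₁·c₂)` on `ℂ × ℂ`. -/
def ternMul (a b c : ℂ × ℂ) : ℂ × ℂ :=
  (a.1 * b.2 * c.1, a.2 * b.1 * c.2)

lemma ternMul_ternMul_left (a b c d e : ℂ × ℂ) :
    ternMul (ternMul a b c) d e = (a.1 * b.2 * c.1 * d.2 * e.1, a.2 * b.1 * c.2 * d.1 * e.2) :=
  rfl

lemma ternMul_ternMul_middle (a b c d e : ℂ × ℂ) :
    ternMul a (ternMul b c d) e = (a.1 * b.2 * c.1 * d.2 * e.1, a.2 * b.1 * c.2 * d.1 * e.2) := by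
  simp only [ternMul, mul_assoc]

lemma ternMul_ternMul_right (a b c d e : ℂ × ℂ) :
    ternMul a b (ternMul c d e) = (a.1 * b.2 * c.1 * d.2 * e.1, a.2 * b.1 * c.2 * d.1 * e.2) := by
  simp only [ternMul, mul_assoc]

/-- The ternary operation `f` on `ℂ × ℂ` is totally ternary associative. -/
theorem stmt10 :
    ∀ a b c d e : ℂ × ℂ,
      ternMul (ternMul a b c) d e = ternMul a (ternMul b c d) e ∧
        ternMul a (ternMul b c d) e = ternMul a b (ternMul c d e) := by
  intro a b c d e
  rw [ternMul_ternMul_left, ternMul_ternMul_middle, ternMul_ternMul_right]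
  exact ⟨rfl, rfl⟩
end

section
/- The set S = { i·p/q : p, q odd integers } ⊆ ℂ is closed under both the ternary multiplication and the ternary addition of complex numbers: if x, y, t ∈ S then x·y·t ∈ S and x + y + t ∈ S. -/
/-- The underlying set of the nonderived zeroless nonunital `(3,3)`-field `𝕜^{(3,3)}`:
purely imaginary numbers `i·p/q` with `p` and `q` odd integers. -/
def Sodd : Set ℂ :=
  {z : ℂ | ∃ p q : ℤ, Odd p ∧ Odd q ∧ z = Complex.I * (p : ℂ) / (q : ℂ)}

/-!
Write the elements of `S` as `i·r` with `r` a ratio of odd integers. Such ratios form a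
multiplicative monoid closed under negation, and a sum of three of them is again one: over the
common denominator `q₁q₂q₃` the numerator is a sum of three odd integers. Since `i³ = -i`, the
ternary product `(i r₁)(i r₂)(i r₃) = i·(-r₁r₂r₃)` and the ternary sum `i(r₁ + r₂ + r₃)` stay in `S`.
-/

open Complex

section OddRatios

variable (K : Type*) [Field K]

def oddRatios : Submonoid K where
  carrier := {x | ∃ p q : ℤ, Odd p ∧ Odd q ∧ x = p / q}
  one_mem' := ⟨1, 1, odd_one, odd_one, by simp⟩
  mul_mem' := by
    rintro _ _ ⟨p, q, hp, hq, rfl⟩ ⟨p', q', hp', hq', rfl⟩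
    exact ⟨p * p', q * q', hp.mul hp', hq.mul hq', by push_cast; rw [div_mul_div_comm]⟩

variable {K}

theorem mem_oddRatios {x : K} : x ∈ oddRatios K ↔ ∃ p q : ℤ, Odd p ∧ Odd q ∧ x = p / q :=
  Iff.rfl

theorem neg_mem_oddRatios {x : K} (hx : x ∈ oddRatios K) : -x ∈ oddRatios K := by
  obtain ⟨p, q, hp, hq, rfl⟩ := hx
  exact ⟨-p, q, hp.neg, hq, by push_cast; rw [neg_div]⟩

theorem intCast_ne_zero_of_odd [CharZero K] {q : ℤ} (hq : Odd q) : (q : K) ≠ 0 :=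
  Int.cast_ne_zero.mpr fun h => by simp [h] at hq

theorem add_add_mem_oddRatios [CharZero K] {x y z : K} (hx : x ∈ oddRatios K)
    (hy : y ∈ oddRatios K) (hz : z ∈ oddRatios K) : x + y + z ∈ oddRatios K := by
  obtain ⟨p₁, q₁, hp₁, hq₁, rfl⟩ := hx
  obtain ⟨p₂, q₂, hp₂, hq₂, rfl⟩ := hy
  obtain ⟨p₃, q₃, hp₃, hq₃, rfl⟩ := hz
  have h₁ := intCast_ne_zero_of_odd (K := K) hq₁
  have h₂ := intCast_ne_zero_of_odd (K := K) hq₂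
  have h₃ := intCast_ne_zero_of_odd (K := K) hq₃
  refine ⟨p₁ * q₂ * q₃ + p₂ * q₁ * q₃ + p₃ * q₁ * q₂, q₁ * q₂ * q₃, ?_,
    (hq₁.mul hq₂).mul hq₃, ?_⟩
  · exact (((hp₁.mul hq₂).mul hq₃).add_odd ((hp₂.mul hq₁).mul hq₃)).add_odd
      ((hp₃.mul hq₁).mul hq₂)
  · push_cast
    field_simp

end OddRatios

theorem mem_Sodd_iff {z : ℂ} : z ∈ Sodd ↔ ∃ r ∈ oddRatios ℂ, z = I * r := by
  simp only [Sodd, Set.mem_ofPred_eq, mem_oddRatios, mul_div_assoc]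
  constructor
  · rintro ⟨p, q, hp, hq, rfl⟩
    exact ⟨_, ⟨p, q, hp, hq, rfl⟩, rfl⟩
  · rintro ⟨_, ⟨p, q, hp, hq, rfl⟩, rfl⟩
    exact ⟨p, q, hp, hq, rfl⟩

/-- `S = { i·p/q : p, q odd }` is closed under the ternary multiplication
`(x,y,t) ↦ x·y·t` and the ternary addition `(x,y,t) ↦ x+y+t` of complex numbers. -/
theorem stmt12 :
    ∀ x ∈ Sodd, ∀ y ∈ Sodd, ∀ t ∈ Sodd, x * y * t ∈ Sodd ∧ x + y + t ∈ Sodd := by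
  intro x hx y hy t ht
  obtain ⟨a, ha, rfl⟩ := mem_Sodd_iff.1 hx
  obtain ⟨b, hb, rfl⟩ := mem_Sodd_iff.1 hy
  obtain ⟨c, hc, rfl⟩ := mem_Sodd_iff.1 ht
  refine ⟨mem_Sodd_iff.2 ⟨-(a * b * c), ?_, ?_⟩, mem_Sodd_iff.2 ⟨a + b + c, ?_, by ring⟩⟩
  · exact neg_mem_oddRatios (mul_mem (mul_mem ha hb) hc)
  · linear_combination (I * a * b * c) * I_sq
  · exact add_add_mem_oddRatios ha hb hc
end

section
/- The set S = { i·p/q : p, q odd integers } ⊆ ℂ is a ternary group under ternary complex addition: for all a, b, c ∈ S there exists a unique x ∈ S with a + b + x = c. In particular, every x ∈ S has its additive querelement in S: −x ∈ S and x + x + (−x) = x. -/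
/-! Over the common odd denominator `q₁q₂q₃`, the numerator of a sum of three elements of `S`
is a sum of three odd integers, hence odd; a sum of two would be even. So `S` is closed under
ternary addition and negation, and the solution `x = c + (-a) + (-b)` of `a + b + x = c` lies
in `S`. -/

lemma Odd.intCast_ne_zero {q : ℤ} (hq : Odd q) : (q : ℂ) ≠ 0 :=
  Int.cast_ne_zero.mpr fun h => by simp [h] at hq

lemma neg_mem_Sodd {z : ℂ} (hz : z ∈ Sodd) : -z ∈ Sodd := by
  obtain ⟨p, q, hp, hq, rfl⟩ := hz
  exact ⟨-p, q, hp.neg, hq, by push_cast; ring⟩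

lemma add_add_mem_Sodd {x y z : ℂ} (hx : x ∈ Sodd) (hy : y ∈ Sodd) (hz : z ∈ Sodd) :
    x + y + z ∈ Sodd := by
  obtain ⟨p₁, q₁, hp₁, hq₁, rfl⟩ := hx
  obtain ⟨p₂, q₂, hp₂, hq₂, rfl⟩ := hy
  obtain ⟨p₃, q₃, hp₃, hq₃, rfl⟩ := hz
  have hnum : Odd (p₁ * q₂ * q₃ + p₂ * q₁ * q₃ + p₃ * q₁ * q₂) :=
    (((hp₁.mul hq₂).mul hq₃).add_odd ((hp₂.mul hq₁).mul hq₃)).add_odd ((hp₃.mul hq₁).mul hq₂)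
  refine ⟨_, q₁ * q₂ * q₃, hnum, (hq₁.mul hq₂).mul hq₃, ?_⟩
  have := hq₁.intCast_ne_zero
  have := hq₂.intCast_ne_zero
  have := hq₃.intCast_ne_zero
  push_cast
  field_simp

/-- `S` is a ternary group under ternary complex addition: `a + b + x = c` has a unique
solution in `S`; every `x ∈ S` has its additive querelement `−x` in `S` with
`x + x + (−x) = x`. -/
theorem stmt14 :
    (∀ a ∈ Sodd, ∀ b ∈ Sodd, ∀ c ∈ Sodd, ∃! x, x ∈ Sodd ∧ a + b + x = c) ∧
      (∀ x ∈ Sodd, -x ∈ Sodd ∧ x + x + (-x) = x) := by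
  refine ⟨fun a ha b hb c hc => ?_, fun x hx => ⟨neg_mem_Sodd hx, by ring⟩⟩
  refine ⟨c + -a + -b, ⟨add_add_mem_Sodd hc (neg_mem_Sodd ha) (neg_mem_Sodd hb), by ring⟩, ?_⟩
  rintro x ⟨-, hx⟩
  linear_combination hx
end

section
/- Let f be the ternary operation on ℂ × ℂ given by f((a₁,a₂),(b₁,b₂),(c₁,c₂)) = (a₁·b₂·c₁, a₂·b₁·c₂) and let S = { i·p/q : p, q odd integers } ⊆ ℂ. Then S × S is closed under f, and ⟨S × S | f⟩ is a ternary group: for all a, b, c ∈ S × S, each of the three equations f(a,b,x) = c, f(a,x,b) = c, and f(x,a,b) = c has a unique solution x ∈ S × S. -/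
theorem existsUnique_mem_and_of_forall_iff_eq {α : Type*} {s : Set α} {p : α → Prop} {x₀ : α}
    (hp : ∀ x, p x ↔ x = x₀) (hx₀ : x₀ ∈ s) : ∃! x, x ∈ s ∧ p x :=
  ⟨x₀, ⟨hx₀, (hp x₀).2 rfl⟩, fun x hx => (hp x).1 hx.2⟩

theorem mul_mul_eq_iff_eq_inv_mul_inv_mul {G₀ : Type*} [CommGroupWithZero G₀] {u v w z : G₀}
    (hu : u ≠ 0) (hv : v ≠ 0) :
    u * v * z = w ↔ z = u⁻¹ * v⁻¹ * w := by
  rw [← mul_inv, eq_inv_mul_iff_mul_eq₀ (mul_ne_zero hu hv)]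

section ternMul

variable {a b c x : ℂ × ℂ}

theorem ternMul_mem_prod {s : Set ℂ} (hs : ∀ u ∈ s, ∀ v ∈ s, ∀ w ∈ s, u * v * w ∈ s)
    (ha : a ∈ s ×ˢ s) (hb : b ∈ s ×ˢ s) (hc : c ∈ s ×ˢ s) : ternMul a b c ∈ s ×ˢ s :=
  ⟨hs _ ha.1 _ hb.2 _ hc.1, hs _ ha.2 _ hb.1 _ hc.2⟩

theorem ternMul_eq_iff_right (ha₁ : a.1 ≠ 0) (ha₂ : a.2 ≠ 0) (hb₁ : b.1 ≠ 0) (hb₂ : b.2 ≠ 0) :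
    ternMul a b x = c ↔ x = (a.1⁻¹ * b.2⁻¹ * c.1, a.2⁻¹ * b.1⁻¹ * c.2) := by
  simp only [ternMul, Prod.ext_iff, mul_mul_eq_iff_eq_inv_mul_inv_mul ha₁ hb₂,
    mul_mul_eq_iff_eq_inv_mul_inv_mul ha₂ hb₁]

theorem ternMul_eq_iff_middle (ha₁ : a.1 ≠ 0) (ha₂ : a.2 ≠ 0) (hb₁ : b.1 ≠ 0) (hb₂ : b.2 ≠ 0) :
    ternMul a x b = c ↔ x = (a.2⁻¹ * b.2⁻¹ * c.2, a.1⁻¹ * b.1⁻¹ * c.1) := by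
  simp only [ternMul, Prod.ext_iff, mul_right_comm _ _ b.1, mul_right_comm _ _ b.2,
    mul_mul_eq_iff_eq_inv_mul_inv_mul ha₁ hb₁, mul_mul_eq_iff_eq_inv_mul_inv_mul ha₂ hb₂]
  exact and_comm

theorem ternMul_eq_iff_left (ha₁ : a.1 ≠ 0) (ha₂ : a.2 ≠ 0) (hb₁ : b.1 ≠ 0) (hb₂ : b.2 ≠ 0) :
    ternMul x a b = c ↔ x = (a.2⁻¹ * b.1⁻¹ * c.1, a.1⁻¹ * b.2⁻¹ * c.2) := by
  simp only [ternMul, Prod.ext_iff, mul_rotate x.1, mul_rotate x.2,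
    mul_mul_eq_iff_eq_inv_mul_inv_mul ha₂ hb₁, mul_mul_eq_iff_eq_inv_mul_inv_mul ha₁ hb₂]

end ternMul

theorem Int.cast_ne_zero_of_odd {R : Type*} [AddGroupWithOne R] [CharZero R] {p : ℤ}
    (hp : Odd p) : (p : R) ≠ 0 :=
  Int.cast_ne_zero.2 (by rintro rfl; exact Int.not_odd_zero hp)

theorem ne_zero_of_mem_Sodd {z : ℂ} (hz : z ∈ Sodd) : z ≠ 0 := by
  obtain ⟨p, q, hp, hq, rfl⟩ := hz
  exact div_ne_zero (mul_ne_zero Complex.I_ne_zero (Int.cast_ne_zero_of_odd hp))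
    (Int.cast_ne_zero_of_odd hq)

theorem inv_mem_Sodd {z : ℂ} (hz : z ∈ Sodd) : z⁻¹ ∈ Sodd := by
  obtain ⟨p, q, hp, hq, rfl⟩ := hz
  refine ⟨-q, p, hq.neg, hp, ?_⟩
  have : (p : ℂ) ≠ 0 := Int.cast_ne_zero_of_odd hp
  have : (q : ℂ) ≠ 0 := Int.cast_ne_zero_of_odd hq
  field_simp
  push_cast
  rw [Complex.I_sq]
  ring

theorem mul_mul_mem_Sodd {u v w : ℂ} (hu : u ∈ Sodd) (hv : v ∈ Sodd) (hw : w ∈ Sodd) :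
    u * v * w ∈ Sodd := by
  obtain ⟨p, q, hp, hq, rfl⟩ := hu
  obtain ⟨r, s, hr, hs, rfl⟩ := hv
  obtain ⟨t, k, ht, hk, rfl⟩ := hw
  refine ⟨-(p * r * t), q * s * k, (hp.mul hr |>.mul ht).neg, hq.mul hs |>.mul hk, ?_⟩
  have : (q : ℂ) ≠ 0 := Int.cast_ne_zero_of_odd hq
  have : (s : ℂ) ≠ 0 := Int.cast_ne_zero_of_odd hs
  have : (k : ℂ) ≠ 0 := Int.cast_ne_zero_of_odd hk
  field_simp
  push_cast
  rw [Complex.I_sq]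
  ring

theorem inv_mul_inv_mul_mem_Sodd {u v w : ℂ} (hu : u ∈ Sodd) (hv : v ∈ Sodd) (hw : w ∈ Sodd) :
    u⁻¹ * v⁻¹ * w ∈ Sodd :=
  mul_mul_mem_Sodd (inv_mem_Sodd hu) (inv_mem_Sodd hv) hw

/-- `S × S` is closed under the ternary multiplication `f`, and `⟨S × S | f⟩` is a
ternary group: each of `f(a,b,x) = c`, `f(a,x,b) = c`, `f(x,a,b) = c` has a unique
solution `x ∈ S × S`. -/
theorem stmt17 :
    (∀ a b c : ℂ × ℂ, a ∈ Sodd ×ˢ Sodd → b ∈ Sodd ×ˢ Sodd → c ∈ Sodd ×ˢ Sodd →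
        ternMul a b c ∈ Sodd ×ˢ Sodd) ∧
      ∀ a ∈ Sodd ×ˢ Sodd, ∀ b ∈ Sodd ×ˢ Sodd, ∀ c ∈ Sodd ×ˢ Sodd,
        (∃! x, x ∈ Sodd ×ˢ Sodd ∧ ternMul a b x = c) ∧
          (∃! x, x ∈ Sodd ×ˢ Sodd ∧ ternMul a x b = c) ∧
          (∃! x, x ∈ Sodd ×ˢ Sodd ∧ ternMul x a b = c) := by
  refine ⟨fun a b c => ternMul_mem_prod fun u hu v hv w hw => mul_mul_mem_Sodd hu hv hw, ?_⟩
  rintro a ⟨ha₁, ha₂⟩ b ⟨hb₁, hb₂⟩ c ⟨hc₁, hc₂⟩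
  have h₀ : ∀ {z}, z ∈ Sodd → z ≠ 0 := ne_zero_of_mem_Sodd
  refine ⟨existsUnique_mem_and_of_forall_iff_eq
      (fun x => ternMul_eq_iff_right (h₀ ha₁) (h₀ ha₂) (h₀ hb₁) (h₀ hb₂))
      ⟨inv_mul_inv_mul_mem_Sodd ha₁ hb₂ hc₁, inv_mul_inv_mul_mem_Sodd ha₂ hb₁ hc₂⟩,
    existsUnique_mem_and_of_forall_iff_eq
      (fun x => ternMul_eq_iff_middle (h₀ ha₁) (h₀ ha₂) (h₀ hb₁) (h₀ hb₂))
      ⟨inv_mul_inv_mul_mem_Sodd ha₂ hb₂ hc₂, inv_mul_inv_mul_mem_Sodd ha₁ hb₁ hc₁⟩,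
    existsUnique_mem_and_of_forall_iff_eq
      (fun x => ternMul_eq_iff_left (h₀ ha₁) (h₀ ha₂) (h₀ hb₁) (h₀ hb₂))
      ⟨inv_mul_inv_mul_mem_Sodd ha₂ hb₁ hc₁, inv_mul_inv_mul_mem_Sodd ha₁ hb₂ hc₂⟩⟩
end

section
/- Let f be the ternary operation on ℂ × ℂ given by f((a₁,a₂),(b₁,b₂),(c₁,c₂)) = (a₁·b₂·c₁, a₂·b₁·c₂) and let S = { i·p/q : p, q odd integers } ⊆ ℂ. Then the ternary ring on S × S is nonunital and zeroless: (i) there is no e ∈ ℂ × ℂ (in particular none in S × S) such that f(e,e,x) = x, f(e,x,e) = x and f(x,e,e) = x for all x ∈ S × S; (ii) there is no z ∈ S × S such that x + y + z = z (componentwise complex addition) for all x, y ∈ S × S. -/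
/-! A unit `e` on the middle place would give `e₁² · x₂ = x₁` for every `x ∈ S × S`; taking
`x = (i, i)` forces `e₁² = 1`, which `x = (i, i/3)` then contradicts. A zero `z` would give
`x + y = 0` for all `x, y ∈ S × S`, which fails at `x = y = (i, i)`. -/

lemma I_div_intCast_mem_Sodd {q : ℤ} (hq : Odd q) : Complex.I / q ∈ Sodd :=
  ⟨1, q, odd_one, hq, by simp⟩

lemma I_mem_Sodd : Complex.I ∈ Sodd := by
  simpa using I_div_intCast_mem_Sodd odd_one

lemma I_div_three_mem_Sodd : Complex.I / 3 ∈ Sodd := by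
  simpa using I_div_intCast_mem_Sodd (q := 3) ⟨1, rfl⟩

lemma I_ne_I_div_three : Complex.I ≠ Complex.I / 3 := by
  intro h
  have : (2 / 3 : ℂ) * Complex.I = 0 := by linear_combination h
  simp [Complex.I_ne_zero] at this

lemma not_exists_mul_snd_eq_fst {M : Type*} [MonoidWithZero M] [IsRightCancelMulZero M]
    {s : Set M} {a b : M} (ha : a ∈ s) (hb : b ∈ s) (ha0 : a ≠ 0) (hab : a ≠ b) :
    ¬ ∃ c : M, ∀ x ∈ s ×ˢ s, c * x.2 = x.1 := by
  rintro ⟨c, hc⟩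
  have hc1 : c = 1 := (mul_eq_right₀ ha0).mp (hc (a, a) ⟨ha, ha⟩)
  have hba : b = a := by simpa [hc1] using hc (a, b) ⟨ha, hb⟩
  exact hab hba.symm

lemma not_exists_add_add_eq_right {M : Type*} [AddCancelMonoid M] {s : Set M} {a : M}
    (ha : a ∈ s) (ha2 : a + a ≠ 0) :
    ¬ ∃ z : M, ∀ x ∈ s, ∀ y ∈ s, x + y + z = z := by
  rintro ⟨z, hz⟩
  exact ha2 (add_eq_right.mp (hz a ha a ha))

/-- The ternary ring on `S × S` is nonunital and zeroless: (i) there is no `e ∈ ℂ × ℂ`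
(in particular none in `S × S`) acting as a polyadic unit on every place, and (ii) there
is no polyadic zero `z ∈ S × S` for componentwise ternary addition. -/
theorem stmt19 :
    (¬ ∃ e : ℂ × ℂ, ∀ x ∈ Sodd ×ˢ Sodd,
        ternMul e e x = x ∧ ternMul e x e = x ∧ ternMul x e e = x) ∧
      ¬ ∃ z ∈ Sodd ×ˢ Sodd, ∀ x ∈ Sodd ×ˢ Sodd, ∀ y ∈ Sodd ×ˢ Sodd, x + y + z = z := by
  constructor
  · rintro ⟨e, he⟩
    refine not_exists_mul_snd_eq_fst I_mem_Sodd I_div_three_mem_Sodd Complex.I_ne_zero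
      I_ne_I_div_three ⟨e.1 * e.1, fun x hx => ?_⟩
    have hmid : e.1 * x.2 * e.1 = x.1 := congrArg Prod.fst (he x hx).2.1
    linear_combination hmid
  · rintro ⟨z, -, hz⟩
    have hII : (Complex.I, Complex.I) + (Complex.I, Complex.I) ≠ 0 := by
      simp [Prod.ext_iff, Complex.I_ne_zero]
    exact not_exists_add_add_eq_right (s := Sodd ×ˢ Sodd) ⟨I_mem_Sodd, I_mem_Sodd⟩ hII
      ⟨z, hz⟩
end
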